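/- arXiv:2009.04690 — 3 statements merged into one kernel-verified Lean document; each statement's English description precedes it below -/
import Mathlib

section
/- Let R be a commutative ring, let (Cⁿ)_{n∈ℤ} and (Dⁿ)_{n∈ℤ} be cochain complexes of R-modules with differentials d_C and d_D, and let f : C → D be a morphism of cochain complexes (a family of R-linear maps fⁿ : Cⁿ → Dⁿ commuting with the differentials). Fix q ∈ ℤ and assume: (i) f^{q−2} : C^{q−2} → D^{q−2} is surjective; (ii) the induced map on q-th cohomology H^q(C) → H^q(D) is injective; (iii) the induced map on (q−1)-th cohomology H^{q−1}(C) → H^{q−1}(D) is surjective. Then for every α ∈ C^q with d_C α = 0 and f^q(α) = 0, there exists β ∈ C^{q−1} with f^{q−1}(β) = 0 and d_C β = α. -/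
/-!
Injectivity on `H^q` makes `α` a coboundary `d γ`. Then `f γ` is a `(q-1)`-cocycle of `D`, and
surjectivity on `H^{q-1}` gives a cocycle `x` of `C` with `f x = f γ + d w`. Lifting `w = f ζ`,
the cochain `β = γ - x + d ζ` still has `d β = α`, and now `f β = 0`.
-/

open CategoryTheory HomologicalComplex

namespace HomologicalComplex

variable {R : Type*} [CommRing R] {ι : Type*} {c : ComplexShape ι}
  {K L : HomologicalComplex (ModuleCat R) c}

lemma Hom.comm_apply (f : K ⟶ L) (i j : ι) (x : K.X i) :
    L.d i j (f.f i x) = f.f j (K.d i j x) := by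
  rw [← ConcreteCategory.comp_apply, f.comm, ConcreteCategory.comp_apply]

lemma cyclesMap_i_apply (f : K ⟶ L) (i : ι) (z : K.cycles i) :
    L.iCycles i (cyclesMap f i z) = f.f i (K.iCycles i z) := by
  rw [← ConcreteCategory.comp_apply, cyclesMap_i, ConcreteCategory.comp_apply]

lemma homologyπ_naturality_apply (f : K ⟶ L) (i : ι) (z : K.cycles i) :
    homologyMap f i (K.homologyπ i z) = L.homologyπ i (cyclesMap f i z) := by
  rw [← ConcreteCategory.comp_apply, homologyπ_naturality, ConcreteCategory.comp_apply]

lemma toCycles_i_apply (i j : ι) (x : K.X i) : K.iCycles j (K.toCycles i j x) = K.d i j x := by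
  rw [← ConcreteCategory.comp_apply, toCycles_i]

lemma iCycles_d_apply (i j : ι) (z : K.cycles i) : K.d i j (K.iCycles i z) = 0 := by
  rw [← ConcreteCategory.comp_apply, iCycles_d]
  rfl

lemma d_comp_d_apply (i j k : ι) (x : K.X i) : K.d j k (K.d i j x) = 0 := by
  rw [← ConcreteCategory.comp_apply, d_comp_d]
  rfl

lemma exists_iCycles_eq {i j : ι} (hj : c.next i = j) (x : K.X i) (hx : K.d i j x = 0) :
    ∃ z : K.cycles i, K.iCycles i z = x :=
  (ShortComplex.moduleCat_exact_iff _).1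
    (ShortComplex.exact_of_f_is_kernel (S := .mk _ _ (K.iCycles_d i j)) (K.cyclesIsKernel i j hj))
    x hx

lemma exists_toCycles_eq_of_homologyπ_eq_zero {i j : ι} (hi : c.prev j = i) (z : K.cycles j)
    (hz : K.homologyπ j z = 0) : ∃ y : K.X i, K.toCycles i j y = z :=
  (ShortComplex.moduleCat_exact_iff _).1
    (ShortComplex.exact_of_g_is_cokernel (S := .mk _ _ (K.toCycles_comp_homologyπ i j))
      (K.homologyIsCokernel i j hi)) z hz

lemma exists_d_eq_of_injective_homologyMap (f : K ⟶ L) {i j k : ι} (hi : c.prev j = i)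
    (hk : c.next j = k) (hf : Function.Injective (homologyMap f j)) (x : K.X j)
    (hx : K.d j k x = 0) (y : L.X i) (hy : L.d i j y = f.f j x) :
    ∃ x' : K.X i, K.d i j x' = x := by
  obtain ⟨z, rfl⟩ := exists_iCycles_eq hk x hx
  have hfz : cyclesMap f j z = L.toCycles i j y :=
    (ModuleCat.mono_iff_injective (L.iCycles j)).1 inferInstance <| by
      rw [cyclesMap_i_apply, toCycles_i_apply, hy]
  have hz : K.homologyπ j z = 0 := hf <| by
    rw [homologyπ_naturality_apply, hfz, ← ConcreteCategory.comp_apply, toCycles_comp_homologyπ,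
      map_zero]
    rfl
  obtain ⟨x', rfl⟩ := exists_toCycles_eq_of_homologyπ_eq_zero hi z hz
  exact ⟨x', (toCycles_i_apply i j x').symm⟩

lemma exists_apply_eq_add_d_of_surjective_homologyMap (f : K ⟶ L) {i j k : ι} (hi : c.prev j = i)
    (hk : c.next j = k) (hf : Function.Surjective (homologyMap f j)) (y : L.X j)
    (hy : L.d j k y = 0) :
    ∃ x : K.X j, K.d j k x = 0 ∧ ∃ w : L.X i, f.f j x = y + L.d i j w := by
  obtain ⟨z', rfl⟩ := exists_iCycles_eq hk y hy
  obtain ⟨h, hh⟩ := hf (L.homologyπ j z')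
  obtain ⟨z, rfl⟩ := (ModuleCat.epi_iff_surjective (K.homologyπ j)).1 inferInstance h
  have hdiff : L.homologyπ j (cyclesMap f j z - z') = 0 := by
    rw [map_sub, ← homologyπ_naturality_apply, hh, sub_self]
  obtain ⟨w, hw⟩ := exists_toCycles_eq_of_homologyπ_eq_zero hi _ hdiff
  refine ⟨K.iCycles j z, iCycles_d_apply j k z, w, ?_⟩
  rw [← cyclesMap_i_apply, ← toCycles_i_apply, hw, map_sub, add_sub_cancel]

end HomologicalComplex

/-- If `f : C ⟶ D` is a morphism of cochain complexes of `R`-modules which is surjective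
in degree `q - 2`, injective on `q`-th cohomology and surjective on `(q-1)`-th cohomology,
then every `q`-cocycle of `C` killed by `f` is the coboundary of a `(q-1)`-cochain
killed by `f`. -/
theorem exists_coboundary_vanishing {R : Type} [CommRing R]
    (C D : CochainComplex (ModuleCat R) ℤ) (f : C ⟶ D) (q : ℤ)
    (h1 : Function.Surjective ⇑(f.f (q - 2)))
    (h2 : Function.Injective ⇑(homologyMap f q))
    (h3 : Function.Surjective ⇑(homologyMap f (q - 1)))
    (α : C.X q) (hα : C.d q (q + 1) α = 0) (hfα : f.f q α = 0) :
    ∃ β : C.X (q - 1), f.f (q - 1) β = 0 ∧ C.d (q - 1) q β = α := by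
  have hprev : ∀ n : ℤ, (ComplexShape.up ℤ).prev n = n - 1 := CochainComplex.prev ℤ
  have hnext : ∀ n : ℤ, (ComplexShape.up ℤ).next n = n + 1 := CochainComplex.next ℤ
  obtain ⟨γ, rfl⟩ := exists_d_eq_of_injective_homologyMap f (hprev q) (hnext q) h2 α hα 0
    (by rw [map_zero, hfα])
  have hfγ : D.d (q - 1) q (f.f (q - 1) γ) = 0 := by rw [Hom.comm_apply, hfα]
  obtain ⟨x, hx, w, hw⟩ := exists_apply_eq_add_d_of_surjective_homologyMap f (i := q - 2)
    (k := q) (by rw [hprev]; ring) (by rw [hnext]; ring) h3 _ hfγ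
  obtain ⟨ζ, rfl⟩ := h1 w
  refine ⟨γ - x + C.d (q - 2) (q - 1) ζ, ?_, ?_⟩
  · rw [map_add, map_sub, ← Hom.comm_apply, hw]
    abel
  · rw [map_add, map_sub, hx, d_comp_d_apply, sub_zero, add_zero]
end

section
/- Let K be a field, let Γ₀ be a linearly ordered commutative group with zero, let v : K → Γ₀ be a valuation, and let γ ∈ Γ₀ with γ ≠ 0. Let a, a' ∈ K satisfy v(a − a') < γ. Then the Gauss valuations of radius γ centered at a and at a' coincide: for every polynomial f ∈ K[X], max over i of v((taylor_a f).coeff i) · γ^i = max over i of v((taylor_{a'} f).coeff i) · γ^i, where taylor_a f denotes the Taylor expansion of f at a, i.e. (taylor_a f).coeff i = cᵢ with f = Σ cᵢ (X − a)^i. -/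
/-- In a linearly ordered commutative group with zero, zero is the bottom element. -/
instance (priority := low) {Γ₀ : Type*} [LinearOrderedCommGroupWithZero Γ₀] : OrderBot Γ₀ :=
  { bot := 0, bot_le := fun _ => zero_le' }

/-- The Gauss valuation of radius `γ` centered at `a`:
`w_{a,γ}(f) = max_i v cᵢ * γ ^ i` where `f = Σ cᵢ (X - a) ^ i` is the Taylor
expansion of `f` at `a`. -/
noncomputable def gaussVal {K Γ₀ : Type*} [Field K] [LinearOrderedCommGroupWithZero Γ₀]
    (v : Valuation K Γ₀) (a : K) (γ : Γ₀) (f : Polynomial K) : Γ₀ :=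
  (Polynomial.taylor a f).support.sup fun i => v ((Polynomial.taylor a f).coeff i) * γ ^ i

lemma val_natCast_le_one {K Γ₀ : Type*} [Field K] [LinearOrderedCommGroupWithZero Γ₀]
    (v : Valuation K Γ₀) (n : ℕ) : v (n : K) ≤ 1 := by
  induction n with
  | zero => simp
  | succ n ih =>
    push_cast
    exact v.map_add_le ih (le_of_eq v.map_one)

lemma gaussVal_taylor_le {K Γ₀ : Type*} [Field K] [LinearOrderedCommGroupWithZero Γ₀]
    (v : Valuation K Γ₀) (d : K) (γ : Γ₀) (hγ : γ ≠ 0) (hd : v d ≤ γ) (g : Polynomial K) :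
    ((Polynomial.taylor d g).support.sup fun j => v ((Polynomial.taylor d g).coeff j) * γ ^ j)
      ≤ g.support.sup fun i => v (g.coeff i) * γ ^ i := by
  set W := g.support.sup fun i => v (g.coeff i) * γ ^ i with hW
  apply Finset.sup_le
  intro j _
  have hγj : (γ ^ j) ≠ 0 := pow_ne_zero _ hγ
  have key : v ((Polynomial.taylor d g).coeff j) ≤ W * (γ ^ j)⁻¹ := by
    rw [Polynomial.taylor_coeff, Polynomial.eval_eq_sum_range]
    apply v.map_sum_le
    intro m _
    rw [Polynomial.hasseDeriv_coeff]
    have hcoeff : v (g.coeff (m + j)) * γ ^ (m + j) ≤ W := by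
      by_cases hc : g.coeff (m + j) = 0
      · simp only [hc, map_zero, zero_mul]
        exact zero_le'
      · rw [hW]
        exact Finset.le_sup (f := fun i => v (g.coeff i) * γ ^ i)
          (Polynomial.mem_support_iff.mpr hc)
    have h1 : v (↑((m + j).choose j) * g.coeff (m + j) * d ^ m)
        ≤ v (g.coeff (m + j)) * γ ^ m := by
      rw [v.map_mul, v.map_mul, v.map_pow]
      calc v ((((m + j).choose j : ℕ) : K)) * v (g.coeff (m + j)) * v d ^ m
          ≤ 1 * v (g.coeff (m + j)) * γ ^ m :=
            mul_le_mul' (mul_le_mul' (val_natCast_le_one v _) le_rfl)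
              (pow_le_pow_left' hd m)
        _ = v (g.coeff (m + j)) * γ ^ m := by rw [one_mul]
    refine h1.trans ?_
    have : v (g.coeff (m + j)) * γ ^ m = v (g.coeff (m + j)) * γ ^ (m + j) * (γ ^ j)⁻¹ := by
      rw [pow_add, mul_assoc, mul_assoc, mul_inv_cancel₀ hγj, mul_one]
    rw [this]
    exact mul_le_mul_left hcoeff _
  calc v ((Polynomial.taylor d g).coeff j) * γ ^ j
      ≤ W * (γ ^ j)⁻¹ * γ ^ j := mul_le_mul_left key _
    _ = W := by rw [mul_assoc, inv_mul_cancel₀ hγj, mul_one]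

/-- If `v (a - a') < γ`, then the Gauss valuations of radius `γ` centered at `a`
and at `a'` coincide. -/
theorem gaussVal_eq_of_lt {K Γ₀ : Type*} [Field K] [LinearOrderedCommGroupWithZero Γ₀]
    (v : Valuation K Γ₀) (a a' : K) (γ : Γ₀) (hγ : γ ≠ 0)
    (h : v (a - a') < γ) (f : Polynomial K) :
    gaussVal v a γ f = gaussVal v a' γ f := by
  have h' : v (a' - a) ≤ γ := by
    rw [show a' - a = -(a - a') by ring, v.map_neg]
    exact h.le
  apply le_antisymm
  · have := gaussVal_taylor_le v (a - a') γ hγ h.le (Polynomial.taylor a' f)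
    rwa [Polynomial.taylor_taylor, sub_add_cancel] at this
  · have := gaussVal_taylor_le v (a' - a) γ hγ h' (Polynomial.taylor a f)
    rwa [Polynomial.taylor_taylor, sub_add_cancel] at this
end

section
/- Let K be a field, let Γ₀ be a linearly ordered commutative group with zero, let v : K → Γ₀ be a valuation, let a, a' ∈ K, and let γ, γ' ∈ Γ₀ be nonzero. Suppose the Gauss valuations w_{a,γ} and w_{a',γ'} are equal as functions on K[X], i.e. for every f ∈ K[X], max_i v((taylor_a f).coeff i)·γ^i = max_i v((taylor_{a'} f).coeff i)·γ'^i. Then γ = γ' and v(a − a') ≤ γ. -/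
open Polynomial in
lemma gaussVal_X_sub_C {K Γ₀ : Type*} [Field K] [LinearOrderedCommGroupWithZero Γ₀]
    (v : Valuation K Γ₀) (a b : K) (γ : Γ₀) :
    gaussVal v a γ (X - C b) = max (v (a - b)) γ := by
  have ht : Polynomial.taylor a (X - C b) = X + C (a - b) := by
    simp [map_sub, Polynomial.taylor_X, Polynomial.taylor_C, C_sub]
    ring
  have hc0 : (X + C (a - b)).coeff 0 = a - b := by simp
  have hc1 : (X + C (a - b)).coeff 1 = 1 := by simp
  unfold gaussVal
  rw [ht]
  apply le_antisymm
  · apply Finset.sup_le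
    intro i hi
    have hne := Polynomial.mem_support_iff.mp hi
    match i with
    | 0 => rw [hc0]; simpa using le_max_left _ _
    | 1 => rw [hc1]; simpa using le_max_right _ _
    | (n+2) => exact absurd (by
        rw [Polynomial.coeff_add, Polynomial.coeff_X, Polynomial.coeff_C]; simp) hne
  · apply max_le
    · rcases eq_or_ne (a - b) 0 with h | h
      · simp [h]
      · have h0 : (0 : ℕ) ∈ (X + C (a - b)).support := by
          rw [Polynomial.mem_support_iff, hc0]; exact h
        have := Finset.le_sup (f := fun i => v ((X + C (a - b)).coeff i) * γ ^ i) h0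
        simpa [hc0] using this
    · have h1 : (1 : ℕ) ∈ (X + C (a - b)).support := by
        rw [Polynomial.mem_support_iff, hc1]; exact one_ne_zero
      have := Finset.le_sup (f := fun i => v ((X + C (a - b)).coeff i) * γ ^ i) h1
      simpa [hc1] using this

/-- If the Gauss valuations `w_{a,γ}` and `w_{a',γ'}` agree on all polynomials,
then `γ = γ'` and `v (a - a') ≤ γ`: the radius of a Gauss point is uniquely
determined, and the center up to distance `γ`. -/
theorem gaussVal_radius_unique {K Γ₀ : Type*} [Field K] [LinearOrderedCommGroupWithZero Γ₀]
    (v : Valuation K Γ₀) (a a' : K) (γ γ' : Γ₀) (hγ : γ ≠ 0) (hγ' : γ' ≠ 0)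
    (heq : ∀ f : Polynomial K, gaussVal v a γ f = gaussVal v a' γ' f) :
    γ = γ' ∧ v (a - a') ≤ γ := by
  have h1 := heq (Polynomial.X - Polynomial.C a)
  have h2 := heq (Polynomial.X - Polynomial.C a')
  rw [gaussVal_X_sub_C, gaussVal_X_sub_C] at h1 h2
  simp only [sub_self, map_zero] at h1 h2
  rw [max_eq_right (zero_le' : (0:Γ₀) ≤ γ)] at h1
  rw [max_eq_right (zero_le' : (0:Γ₀) ≤ γ')] at h2
  -- h1 : γ = max (v (a' - a)) γ'
  -- h2 : max (v (a - a')) γ = γ'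
  have hle : γ' ≤ γ := h1 ▸ le_max_right _ _
  have hle' : γ ≤ γ' := h2 ▸ le_max_right (v (a - a')) γ
  have hgg : γ = γ' := le_antisymm hle' hle
  refine ⟨hgg, ?_⟩
  have := h2 ▸ le_max_left (v (a - a')) γ
  exact hgg ▸ this
end
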